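/- arXiv:2103.13731 — 3 statements merged into one kernel-verified Lean document; each statement's English description precedes it below -/
import Mathlib

section
/- Let a, b, c be positive integers and let Γ be the Z-grading of K[x,y,z] with deg x = a, deg y = b, deg z = −c. If φ is a Γ-graded automorphism of K[x,y,z], then φ(z) = λz for some nonzero λ ∈ K. -/
open MvPolynomial

/-- For the `ℤ`-grading of `K[x,y,z]` with weights `w`, an automorphism is *graded*
if it maps each homogeneous component into itself. -/
def IsGraded {K : Type*} [CommRing K] (w : Fin 3 → ℤ)
    (φ : MvPolynomial (Fin 3) K ≃ₐ[K] MvPolynomial (Fin 3) K) : Prop :=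
  ∀ (d : ℤ) (f : MvPolynomial (Fin 3) K),
    f.IsWeightedHomogeneous w d → (φ f).IsWeightedHomogeneous w d

/-! `z = X 2` is the only variable of negative degree, so every monomial of `φ z`, which has
degree `deg z < 0`, contains `z`. Thus `z ∣ φ z`; as `φ z` is prime, like `z`, the two are
associated, and the units of `K[x,y,z]` are the nonzero constants. -/

namespace MvPolynomial

variable {σ R : Type*}

theorem X_dvd_of_isWeightedHomogeneous_of_neg [CommSemiring R] {w : σ → ℤ} {j : σ}
    (hw : ∀ i ≠ j, 0 ≤ w i) {d : ℤ} (hd : d < 0) {f : MvPolynomial σ R}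
    (hf : f.IsWeightedHomogeneous w d) : X j ∣ f := by
  rw [f.as_sum]
  refine Finset.dvd_sum fun m hm => X_dvd_monomial.mpr (Or.inr fun hmj => ?_)
  have hweight : 0 ≤ Finsupp.weight w m := by
    rw [Finsupp.weight_apply]
    refine Finsupp.sum_nonneg fun i hi => ?_
    have hij : i ≠ j := by rintro rfl; exact Finsupp.mem_support_iff.mp hi hmj
    exact smul_nonneg (Nat.cast_nonneg _) (hw i hij)
  exact hd.not_ge (hf (mem_support_iff.mp hm) ▸ hweight)

theorem exists_eq_C_mul_X_of_associated [Field R] {i : σ} {f : MvPolynomial σ R}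
    (h : Associated (X i) f) : ∃ l : R, l ≠ 0 ∧ f = C l * X i := by
  obtain ⟨u, rfl⟩ := h
  obtain ⟨l, hl, hu⟩ := (isUnit_iff_eq_C_of_isReduced).mp u.isUnit
  exact ⟨l, hl.ne_zero, by rw [hu, mul_comm]⟩

end MvPolynomial

theorem graded_automorphism_scales_z_general
    {K : Type*} [Field K]
    (a b c : ℕ) (hc : 0 < c)
    (φ : MvPolynomial (Fin 3) K ≃ₐ[K] MvPolynomial (Fin 3) K)
    (hφ : IsGraded ![(a : ℤ), (b : ℤ), -(c : ℤ)] φ) :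
    ∃ l : K, l ≠ 0 ∧ φ (X 2) = C l * X 2 := by
  set w : Fin 3 → ℤ := ![(a : ℤ), (b : ℤ), -(c : ℤ)]
  have hw : ∀ i ≠ (2 : Fin 3), 0 ≤ w i := by
    intro i hi
    fin_cases i <;> simp_all [w]
  have hz : (φ (X 2)).IsWeightedHomogeneous w (-c) := hφ _ _ (isWeightedHomogeneous_X K w 2)
  have hdvd : X 2 ∣ φ (X 2) := X_dvd_of_isWeightedHomogeneous_of_neg hw (by omega) hz
  have hprime : Prime (X 2 : MvPolynomial (Fin 3) K) := X_prime
  exact exists_eq_C_mul_X_of_associated <|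
    hprime.associated_of_dvd ((MulEquiv.prime_iff φ).mpr hprime) hdvd

/-- For the `ℤ`-grading of `K[x,y,z]` with `deg x = a > 0`, `deg y = b > 0`,
`deg z = -c < 0`, every graded automorphism satisfies `φ(z) = λ z` for some `λ ≠ 0`.
Here `x = X 0`, `y = X 1`, `z = X 2`. -/
theorem graded_automorphism_scales_z
    {K : Type*} [Field K] [IsAlgClosed K] [CharZero K]
    (a b c : ℕ) (ha : 0 < a) (hb : 0 < b) (hc : 0 < c)
    (φ : MvPolynomial (Fin 3) K ≃ₐ[K] MvPolynomial (Fin 3) K)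
    (hφ : IsGraded ![(a : ℤ), (b : ℤ), -(c : ℤ)] φ) :
    ∃ l : K, l ≠ 0 ∧ φ (X 2) = C l * X 2 :=
  graded_automorphism_scales_z_general a b c hc φ hφ
end

section
/- Let a, b, c be positive integers and let Γ be the Z-grading of K[x,y,z] with deg x = a, deg y = b, deg z = −c. If gcd(a,c) does not divide b, then every Γ-graded automorphism of K[x,y,z] has the form x ↦ λ₁x + f₀(y,z), y ↦ λ₂y, z ↦ λ₃z, where λ₁, λ₂, λ₃ ∈ K are nonzero and f₀ is a Γ-homogeneous polynomial in y, z of degree a. -/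
open MvPolynomial

namespace MvPolynomial

variable {R : Type*}

section CommSemiring

variable [CommSemiring R]

theorem X_dvd_of_forall_mem_support {σ : Type*} {i : σ} {f : MvPolynomial σ R}
    (h : ∀ m ∈ f.support, m i ≠ 0) : X i ∣ f := by
  classical
  rw [X_dvd_iff_modMonomial_eq_zero]
  ext m
  by_cases hm : Finsupp.single i 1 ≤ m
  · rw [coeff_modMonomial_of_le _ hm, coeff_zero]
  · rw [coeff_modMonomial_of_not_le _ hm, coeff_zero, ← notMem_support_iff]
    exact fun hmf => hm (Finsupp.single_le_iff.mpr (Nat.one_le_iff_ne_zero.mpr (h m hmf)))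

theorem X_dvd_of_isWeightedHomogeneous {σ M : Type*} [AddCommMonoid M] {w : σ → M} {d : M}
    {i : σ} (h : ∀ m : σ →₀ ℕ, m i = 0 → Finsupp.weight w m ≠ d) {f : MvPolynomial σ R}
    (hf : f.IsWeightedHomogeneous w d) : X i ∣ f :=
  X_dvd_of_forall_mem_support fun m hm hmi => h m hmi (hf (mem_support_iff.mp hm))

theorem weightedHomogeneousComponent_map {σ M : Type*} [AddCommMonoid M] {w : σ → M}
    (φ : MvPolynomial σ R →ₗ[R] MvPolynomial σ R)
    (hφ : ∀ d f, IsWeightedHomogeneous w f d → IsWeightedHomogeneous w (φ f) d)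
    (d : M) (f : MvPolynomial σ R) :
    weightedHomogeneousComponent w d (φ f) = φ (weightedHomogeneousComponent w d f) := by
  classical
  conv_lhs => rw [← sum_weightedHomogeneousComponent w f]
  rw [← LinearMap.comp_apply, map_finsum _ (weightedHomogeneousComponent_finsupp f)]
  have hφf (e : M) := hφ e _ (weightedHomogeneousComponent_isWeightedHomogeneous e f)
  exact (finsum_eq_single _ d fun e he => (hφf e).weightedHomogeneousComponent_ne d he.symm).trans
    (hφf d).weightedHomogeneousComponent_same

theorem finSuccEquiv_rename_succ {n : ℕ} (f : MvPolynomial (Fin n) R) :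
    finSuccEquiv R n (rename Fin.succ f) = Polynomial.C f := by
  induction f using MvPolynomial.induction_on with
  | C r => rw [rename_C, finSuccEquiv_apply, eval₂Hom_C]; rfl
  | add f g hf hg => rw [map_add, map_add, hf, hg, Polynomial.C_add]
  | mul_X f j hf => rw [map_mul, map_mul, hf, rename_X, finSuccEquiv_X_succ, Polynomial.C_mul]

theorem finSuccEquiv_symm_C {n : ℕ} (f : MvPolynomial (Fin n) R) :
    (finSuccEquiv R n).symm (Polynomial.C f) = rename Fin.succ f :=
  (AlgEquiv.symm_apply_eq _).mpr (finSuccEquiv_rename_succ f).symm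

theorem finSuccEquiv_aeval_cons {n : ℕ} (p : MvPolynomial (Fin (n + 1)) R)
    (g : Fin n → MvPolynomial (Fin n) R) (f : MvPolynomial (Fin (n + 1)) R) :
    finSuccEquiv R n (aeval (Fin.cons p fun j => rename Fin.succ (g j)) f) =
      ((finSuccEquiv R n f).map (aeval g).toRingHom).comp (finSuccEquiv R n p) := by
  induction f using MvPolynomial.induction_on with
  | C r => simp [finSuccEquiv_apply]
  | add f g hf hg => rw [map_add, map_add, hf, hg, map_add, Polynomial.map_add, Polynomial.add_comp]
  | mul_X f j hf =>
    rw [map_mul, map_mul, hf, map_mul, Polynomial.map_mul, Polynomial.mul_comp, aeval_X]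
    congr 1
    induction j using Fin.cases with
    | zero => simp [finSuccEquiv_X_zero]
    | succ j => simp [finSuccEquiv_X_succ, finSuccEquiv_rename_succ]

theorem zero_notMem_vars_rename_succ {n : ℕ}
    (f : MvPolynomial (Fin n) R) : (0 : Fin (n + 1)) ∉ (rename Fin.succ f).vars := fun h => by
  obtain ⟨j, -, hj⟩ := mem_vars_rename _ f h
  exact Fin.succ_ne_zero j hj

end CommSemiring

section Domain

variable [CommRing R] [IsDomain R]

theorem exists_isUnit_map_X_eq_C_mul_X {σ : Type*}
    (φ : MvPolynomial σ R ≃ₐ[R] MvPolynomial σ R) {i : σ}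
    (h : X i ∣ φ (X i)) (h' : X i ∣ φ.symm (X i)) :
    ∃ l : R, IsUnit l ∧ φ (X i) = C l * X i := by
  obtain ⟨u, hu⟩ := h
  obtain ⟨v, hv⟩ := h'
  have huv : u * φ v = 1 := by
    apply mul_left_cancel₀ (X_ne_zero i)
    rw [mul_one, ← mul_assoc, ← hu, ← map_mul, ← hv, φ.apply_symm_apply]
  obtain ⟨l, hl, rfl⟩ := isUnit_iff_eq_C_of_isReduced.mp (IsUnit.of_mul_eq_one _ huv)
  exact ⟨l, hl, by rw [hu, mul_comm]⟩

theorem exists_map_X_zero_eq_C_mul_X_zero_add_rename {n : ℕ}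
    (φ : MvPolynomial (Fin (n + 1)) R ≃ₐ[R] MvPolynomial (Fin (n + 1)) R)
    (g : Fin n → MvPolynomial (Fin n) R) (hg : ∀ j, φ (X j.succ) = rename Fin.succ (g j)) :
    ∃ (l : R) (f₀ : MvPolynomial (Fin n) R),
      IsUnit l ∧ φ (X 0) = C l * X 0 + rename Fin.succ f₀ := by
  set E := finSuccEquiv R n
  set p := E (φ (X 0))
  have hφ : (φ : MvPolynomial (Fin (n + 1)) R →ₐ[R] _) =
      aeval (Fin.cons (φ (X 0)) fun j => rename Fin.succ (g j)) :=
    algHom_ext fun i => by induction i using Fin.cases <;> simp [hg]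
  -- Over `R[X₁, …, Xₙ]`, `φ` is "map the coefficients by `aeval g`, then substitute `p` for `X₀`",
  -- so `X₀ = φ (φ.symm X₀)` writes `X` as a composite `q.comp p`.
  have hcomp : Polynomial.X = ((E (φ.symm (X 0))).map (aeval g).toRingHom).comp p := by
    rw [← finSuccEquiv_aeval_cons, ← hφ]
    simp [finSuccEquiv_X_zero]
  obtain ⟨hqdeg, hpdeg⟩ : _ ∧ p.natDegree = 1 := by
    have := congrArg Polynomial.natDegree hcomp
    rwa [Polynomial.natDegree_X, Polynomial.natDegree_comp, eq_comm, mul_eq_one] at this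
  have hunit : IsUnit (p.coeff 1) := by
    have := congrArg Polynomial.leadingCoeff hcomp
    rw [Polynomial.leadingCoeff_X, Polynomial.leadingCoeff_comp (by omega), hqdeg, pow_one] at this
    rw [← hpdeg]
    exact IsUnit.of_mul_eq_one_right _ this.symm
  obtain ⟨l, hl, hlc⟩ := isUnit_iff_eq_C_of_isReduced.mp hunit
  refine ⟨l, p.coeff 0, hl, ?_⟩
  have hp : p = Polynomial.C (C l) * Polynomial.X + Polynomial.C (p.coeff 0) := by
    conv_lhs => rw [Polynomial.eq_X_add_C_of_natDegree_le_one hpdeg.le, hlc]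
  have hX : E.symm Polynomial.X = X 0 := (AlgEquiv.symm_apply_eq _).mpr finSuccEquiv_X_zero.symm
  calc φ (X 0) = E.symm p := (E.symm_apply_apply _).symm
    _ = E.symm (Polynomial.C (C l) * Polynomial.X + Polynomial.C (p.coeff 0)) := congrArg E.symm hp
    _ = C l * X 0 + rename Fin.succ (p.coeff 0) := by
      rw [map_add, map_mul, finSuccEquiv_symm_C, finSuccEquiv_symm_C, rename_C, hX]

end Domain

end MvPolynomial

theorem Finsupp.weight_fin_three (a b c : ℤ) (m : Fin 3 →₀ ℕ) :
    Finsupp.weight ![a, b, -c] m = m 0 * a + m 1 * b - m 2 * c := by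
  rw [Finsupp.weight_apply, Finsupp.sum_fintype _ _ (by simp), Fin.sum_univ_three]
  simp only [Matrix.cons_val_zero, Matrix.cons_val_one, Matrix.cons_val_two, Matrix.tail_cons,
    Matrix.head_cons, nsmul_eq_mul]
  ring

namespace IsGraded

variable {R : Type*} [CommRing R] {w : Fin 3 → ℤ}
  {φ : MvPolynomial (Fin 3) R ≃ₐ[R] MvPolynomial (Fin 3) R}

theorem symm (hφ : IsGraded w φ) : IsGraded w φ.symm := by
  intro d f hf
  have hcomp : weightedHomogeneousComponent w d (φ.symm f) = φ.symm f := φ.injective <| by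
    have := weightedHomogeneousComponent_map φ.toLinearMap hφ d (φ.symm f)
    simp only [AlgEquiv.toLinearMap_apply, AlgEquiv.apply_symm_apply] at this
    rw [← this, hf.weightedHomogeneousComponent_same, φ.apply_symm_apply]
  rw [← hcomp]
  exact weightedHomogeneousComponent_isWeightedHomogeneous d _

theorem exists_map_X_eq_C_mul_X [IsDomain R] (hφ : IsGraded w φ) (i : Fin 3)
    (hi : ∀ m : Fin 3 →₀ ℕ, m i = 0 → Finsupp.weight w m ≠ w i) :
    ∃ l : R, IsUnit l ∧ φ (X i) = C l * X i :=
  MvPolynomial.exists_isUnit_map_X_eq_C_mul_X φ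
    (X_dvd_of_isWeightedHomogeneous hi (hφ _ _ (isWeightedHomogeneous_X R w i)))
    (X_dvd_of_isWeightedHomogeneous hi (hφ.symm _ _ (isWeightedHomogeneous_X R w i)))

end IsGraded

theorem graded_automorphism_is_almost_diagonal_of_gcd_not_dvd_general
    {K : Type*} [Field K]
    (a b c : ℕ) (hc : 0 < c)
    (hgcd : ¬ (Nat.gcd a c ∣ b))
    (φ : MvPolynomial (Fin 3) K ≃ₐ[K] MvPolynomial (Fin 3) K)
    (hφ : IsGraded ![(a : ℤ), (b : ℤ), -(c : ℤ)] φ) :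
    ∃ (l₁ l₂ l₃ : K) (f₀ : MvPolynomial (Fin 3) K),
      l₁ ≠ 0 ∧ l₂ ≠ 0 ∧ l₃ ≠ 0 ∧ (0 : Fin 3) ∉ f₀.vars ∧
      f₀.IsWeightedHomogeneous ![(a : ℤ), (b : ℤ), -(c : ℤ)] (a : ℤ) ∧
      φ (X 0) = C l₁ * X 0 + f₀ ∧ φ (X 1) = C l₂ * X 1 ∧ φ (X 2) = C l₃ * X 2 := by
  obtain ⟨l₂, hl₂, hy⟩ := hφ.exists_map_X_eq_C_mul_X 1 fun m hm hw => hgcd <| by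
    rw [Finsupp.weight_fin_three, hm] at hw
    rw [← Int.gcd_natCast_natCast, Int.gcd_dvd_iff]
    simp only [Nat.cast_zero, zero_mul, add_zero, Matrix.cons_val_one, Matrix.cons_val_zero] at hw
    exact ⟨m 0, -m 2, by linarith⟩
  obtain ⟨l₃, hl₃, hz⟩ := hφ.exists_map_X_eq_C_mul_X 2 fun m hm hw => by
    rw [Finsupp.weight_fin_three, hm] at hw
    have : (0 : ℤ) ≤ m 0 * a + m 1 * b := by positivity
    simp only [Nat.cast_zero, zero_mul, sub_zero, Matrix.cons_val] at hw
    omega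
  obtain ⟨l₁, f₀, hl₁, hx⟩ := exists_map_X_zero_eq_C_mul_X_zero_add_rename φ
    ![C l₂ * X 0, C l₃ * X 1] (Fin.forall_fin_two.mpr ⟨by simp [hy], by simp [hz]⟩)
  refine ⟨l₁, l₂, l₃, rename Fin.succ f₀, hl₁.ne_zero, hl₂.ne_zero, hl₃.ne_zero,
    zero_notMem_vars_rename_succ f₀, ?_, hx, hy, hz⟩
  rw [eq_sub_of_add_eq' hx.symm]
  exact (hφ _ _ (isWeightedHomogeneous_X K _ 0)).sub
    (by simpa only [zero_add] using
      (isWeightedHomogeneous_C _ l₁).mul (isWeightedHomogeneous_X K _ 0))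

/-- Let `Γ` be the `ℤ`-grading of `K[x,y,z]` with `deg x = a`, `deg y = b`,
`deg z = -c`, where `a, b, c > 0`. If `gcd(a,c)` does not divide `b`, then every
graded automorphism has the form `x ↦ λ₁ x + f₀(y,z)`, `y ↦ λ₂ y`, `z ↦ λ₃ z`,
where `λ₁, λ₂, λ₃ ≠ 0` and `f₀` is a `Γ`-homogeneous polynomial in `y, z` of degree `a`.
Here `x = X 0`, `y = X 1`, `z = X 2`. -/
theorem graded_automorphism_is_almost_diagonal_of_gcd_not_dvd
    {K : Type*} [Field K] [IsAlgClosed K] [CharZero K]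
    (a b c : ℕ) (ha : 0 < a) (hb : 0 < b) (hc : 0 < c)
    (hgcd : ¬ (Nat.gcd a c ∣ b))
    (φ : MvPolynomial (Fin 3) K ≃ₐ[K] MvPolynomial (Fin 3) K)
    (hφ : IsGraded ![(a : ℤ), (b : ℤ), -(c : ℤ)] φ) :
    ∃ (l₁ l₂ l₃ : K) (f₀ : MvPolynomial (Fin 3) K),
      l₁ ≠ 0 ∧ l₂ ≠ 0 ∧ l₃ ≠ 0 ∧ (0 : Fin 3) ∉ f₀.vars ∧
      f₀.IsWeightedHomogeneous ![(a : ℤ), (b : ℤ), -(c : ℤ)] (a : ℤ) ∧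
      φ (X 0) = C l₁ * X 0 + f₀ ∧ φ (X 1) = C l₂ * X 1 ∧ φ (X 2) = C l₃ * X 2 :=
  graded_automorphism_is_almost_diagonal_of_gcd_not_dvd_general a b c hc hgcd φ hφ
end

section
/- Let a ≥ b be positive integers and c a positive integer with gcd(a,c) = gcd(b,c) = 1, let Γ be the Z-grading of K[x,y,z] with deg x = a, deg y = b, deg z = −c, and let q̂ = max{q ∈ Z : bq ≡ a (mod c) and bq < a}. If φ is a Γ-graded automorphism fixing z that is a composition of Γ-graded elementary automorphisms, and φ(x) = f, φ(y) = g, then f(u,v,1) = λu + G for some nonzero λ ∈ K and some polynomial G lying in the ideal I^{q̂+c}, where I = (u,v) is the ideal of K[u,v] generated by u and v. -/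
open MvPolynomial

/-- An automorphism of `K[x,y,z]` is *elementary* if it sends one variable to itself plus
a polynomial in the other two variables and fixes the other variables. -/
def IsElementary {K : Type*} [CommRing K]
    (φ : MvPolynomial (Fin 3) K ≃ₐ[K] MvPolynomial (Fin 3) K) : Prop :=
  ∃ (i : Fin 3) (F : MvPolynomial (Fin 3) K), i ∉ F.vars ∧
    φ (X i) = X i + F ∧ ∀ j : Fin 3, j ≠ i → φ (X j) = X j

/-- The restriction homomorphism `K[x,y,z] → K[u,v]`, `x ↦ u`, `y ↦ v`, `z ↦ 1`,
i.e. restriction of functions to the plane `z = 1`. -/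
noncomputable def restrict (K : Type*) [CommRing K] :
    MvPolynomial (Fin 3) K →ₐ[K] MvPolynomial (Fin 2) K :=
  aeval ![X 0, X 1, 1]

/- ------------------ auxiliary lemmas ------------------- -/

lemma weight_eq_aux (a b c : ℕ) (d : Fin 3 →₀ ℕ) :
    Finsupp.weight ![(a : ℤ), (b : ℤ), -(c : ℤ)] d
      = (d 0 : ℤ) * a + (d 1 : ℤ) * b + (d 2 : ℤ) * (-(c : ℤ)) := by
  rw [Finsupp.weight_apply, Finsupp.sum_fintype]
  · rw [Fin.sum_univ_three]
    simp [nsmul_eq_mul]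
  · intro i; simp

lemma nt_lemma (a b c : ℕ) (hb : 0 < b) (hc : 0 < c) (qhat : ℤ)
    (hq1 : (b : ℤ) * qhat ≡ (a : ℤ) [ZMOD (c : ℤ)])
    (hq2 : (b : ℤ) * qhat < (a : ℤ))
    (hbc : IsCoprime (c : ℤ) (b : ℤ))
    (d1 d2 : ℕ) (heq : (d1 : ℤ) * b + (d2 : ℤ) * (-(c : ℤ)) = a) :
    qhat + c ≤ (d1 : ℤ) := by
  have h1 : (c : ℤ) ∣ (a : ℤ) - (b : ℤ) * qhat := (Int.ModEq.dvd hq1)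
  have h2 : (c : ℤ) ∣ (b : ℤ) * d1 - a := ⟨d2, by linarith⟩
  have h3 : (c : ℤ) ∣ (b : ℤ) * ((d1 : ℤ) - qhat) := by
    have := dvd_add h2 h1
    have heq2 : (b : ℤ) * d1 - a + ((a : ℤ) - (b : ℤ) * qhat)
        = (b : ℤ) * ((d1 : ℤ) - qhat) := by ring
    rwa [heq2] at this
  have h4 : (c : ℤ) ∣ (d1 : ℤ) - qhat := hbc.dvd_of_dvd_mul_left h3
  have h5 : (b : ℤ) * qhat < (b : ℤ) * d1 := by
    have : (b : ℤ) * d1 = (a : ℤ) + c * d2 := by linarith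
    have hcd : (0 : ℤ) ≤ (c : ℤ) * d2 := by positivity
    linarith
  have h6 : qhat < (d1 : ℤ) := by
    have hbz : (0 : ℤ) < b := by exact_mod_cast hb
    exact lt_of_mul_lt_mul_left h5 (le_of_lt hbz)
  have h7 : (c : ℤ) ≤ (d1 : ℤ) - qhat := Int.le_of_dvd (by linarith) h4
  linarith

set_option maxHeartbeats 1000000 in
/-- Let `a ≥ b > 0`, `c > 0` with `gcd(a,c) = gcd(b,c) = 1`, let `Γ` be the
`ℤ`-grading of `K[x,y,z]` with `deg x = a`, `deg y = b`, `deg z = -c`, and let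
`q̂ = max {q ∈ ℤ : bq ≡ a (mod c), bq < a}`. If a `Γ`-graded automorphism `φ`
fixing `z` is a composition of `Γ`-graded elementary automorphisms, then the
restriction of `φ(x)` to the plane `z = 1` equals `λ u + G` with `λ ≠ 0` and
`G ∈ I^(q̂+c)`, where `I = (u,v) ⊲ K[u,v]`.
Here `x = X 0`, `y = X 1`, `z = X 2`, `u = X 0`, `v = X 1`. -/
theorem graded_tame_automorphism_restriction_in_high_power_of_ideal
    {K : Type*} [Field K] [IsAlgClosed K] [CharZero K]
    (a b c : ℕ) (ha : 0 < a) (hb : 0 < b) (hc : 0 < c) (hab : b ≤ a)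
    (hac : Nat.gcd a c = 1) (hbc : Nat.gcd b c = 1)
    (qhat : ℤ)
    (hqhat : IsGreatest {q : ℤ | (b : ℤ) * q ≡ (a : ℤ) [ZMOD (c : ℤ)] ∧ (b : ℤ) * q < (a : ℤ)} qhat)
    (φ : MvPolynomial (Fin 3) K ≃ₐ[K] MvPolynomial (Fin 3) K)
    (hφ : IsGraded ![(a : ℤ), (b : ℤ), -(c : ℤ)] φ)
    (hz : φ (X 2) = X 2)
    (htame : ∃ l : List (MvPolynomial (Fin 3) K ≃ₐ[K] MvPolynomial (Fin 3) K),
      (∀ ψ ∈ l, IsGraded ![(a : ℤ), (b : ℤ), -(c : ℤ)] ψ ∧ IsElementary ψ) ∧ φ = l.prod) :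
    ∃ (lam : K) (G : MvPolynomial (Fin 2) K), lam ≠ 0 ∧
      G ∈ (Ideal.span {(X 0 : MvPolynomial (Fin 2) K), X 1}) ^ (qhat + c).toNat ∧
      restrict K (φ (X 0)) = C lam * X 0 + G := by
  obtain ⟨l, hl, rfl⟩ := htame
  clear hφ hz
  set w : Fin 3 → ℤ := ![(a : ℤ), (b : ℤ), -(c : ℤ)] with hw
  set I : Ideal (MvPolynomial (Fin 2) K) := Ideal.span {(X 0 : MvPolynomial (Fin 2) K), X 1}
    with hI
  set N : ℕ := (qhat + c).toNat with hN
  obtain ⟨hq1, hq2⟩ := hqhat.1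
  -- `qhat + c ≥ 1`
  have hN1' : 1 ≤ qhat + c := by
    by_contra hcon
    push_neg at hcon
    -- then b * (qhat + c) ≤ b * qhat + b*c ... show qhat + c ∈ the set
    have hmem : (b : ℤ) * (qhat + c) ≡ (a : ℤ) [ZMOD (c : ℤ)] ∧ (b : ℤ) * (qhat + c) < a := by
      constructor
      · have : (b : ℤ) * (qhat + c) ≡ (b : ℤ) * qhat [ZMOD (c : ℤ)] := by
          have : (c : ℤ) ∣ (b : ℤ) * (qhat + c) - (b : ℤ) * qhat := ⟨b, by ring⟩
          exact (Int.modEq_iff_dvd.mpr (by simpa using this.neg_right.neg_left.neg_left)).symm.symm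
        exact this.trans hq1
      · have hbz : (0 : ℤ) < b := by exact_mod_cast hb
        have haz : (b : ℤ) ≤ a := by exact_mod_cast hab
        nlinarith
    have := hqhat.2 hmem
    have hcz : (0 : ℤ) < c := by exact_mod_cast hc
    linarith
  have hN1 : 1 ≤ N := by omega
  have hcb : IsCoprime (c : ℤ) (b : ℤ) := by
    rw [Int.isCoprime_iff_gcd_eq_one]
    simpa [Int.gcd_natCast_natCast, Nat.gcd_comm] using hbc
  -- basic restrictions
  have hr0 : restrict K (X 0 : MvPolynomial (Fin 3) K) = X 0 := by simp [restrict]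
  have hr1 : restrict K (X 1 : MvPolynomial (Fin 3) K) = X 1 := by simp [restrict]
  have hr2 : restrict K (X 2 : MvPolynomial (Fin 3) K) = 1 := by simp [restrict]
  have hX0I : (X 0 : MvPolynomial (Fin 2) K) ∈ I :=
    Ideal.subset_span (by simp)
  have hX1I : (X 1 : MvPolynomial (Fin 2) K) ∈ I :=
    Ideal.subset_span (by simp)
  -- main induction
  have key : ∀ l : List (MvPolynomial (Fin 3) K ≃ₐ[K] MvPolynomial (Fin 3) K),
      (∀ ψ ∈ l, IsGraded w ψ ∧ IsElementary ψ) →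
      l.prod (X 2) = X 2 ∧ restrict K (l.prod (X 0)) - X 0 ∈ I ^ N ∧
        restrict K (l.prod (X 1)) ∈ I := by
    intro l
    induction l using List.reverseRecOn with
    | nil =>
      intro _
      refine ⟨by simp, by simp [hr0], by simp [hr1, hX1I]⟩
    | append_singleton l e ih =>
      intro hl'
      have hlmem : ∀ ψ ∈ l, IsGraded w ψ ∧ IsElementary ψ := fun ψ hψ =>
        hl' ψ (by simp [hψ])
      obtain ⟨hz2, hx2, hy2⟩ := ih hlmem
      obtain ⟨hge, ⟨i, F, hv, he, hfix⟩⟩ := hl' e (by simp)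
      set ψ : MvPolynomial (Fin 3) K ≃ₐ[K] MvPolynomial (Fin 3) K := l.prod with hψdef
      have hprod : ∀ P : MvPolynomial (Fin 3) K, (l ++ [e]).prod P = ψ (e P) := by
        intro P
        rw [List.prod_append, List.prod_singleton, AlgEquiv.mul_apply]
      set p : MvPolynomial (Fin 2) K := restrict K (ψ (X 0)) with hp
      set q : MvPolynomial (Fin 2) K := restrict K (ψ (X 1)) with hq
      have hpI : p ∈ I := by
        have : p = (p - X 0) + X 0 := by ring
        rw [this]
        refine Ideal.add_mem I ?_ hX0I
        have hle : I ^ N ≤ I := by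
          calc I ^ N ≤ I ^ 1 := Ideal.pow_le_pow_right hN1
          _ = I := pow_one I
        exact hle hx2
      have hqI : q ∈ I := hy2
      -- the composite restriction
      have hcomp : ∀ P : MvPolynomial (Fin 3) K,
          restrict K (ψ P) = aeval ![p, q, 1] P := by
        have : (restrict K).comp (ψ : MvPolynomial (Fin 3) K →ₐ[K] MvPolynomial (Fin 3) K)
            = aeval ![p, q, 1] := by
          apply MvPolynomial.algHom_ext
          intro j
          fin_cases j <;>
            simp only [AlgHom.comp_apply, AlgEquiv.coe_algHom, aeval_X] <;>
            simp [hp, hq, hz2, hr2, Fin.isValue]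
        intro P
        have := DFunLike.congr_fun this P
        simpa using this
      -- homogeneity of F
      have hF : F.IsWeightedHomogeneous w (w i) := by
        have hXi : (X i : MvPolynomial (Fin 3) K).IsWeightedHomogeneous w (w i) :=
          isWeightedHomogeneous_X K w i
        have hE := hge (w i) (X i) hXi
        rw [he] at hE
        intro d hd
        by_cases h0 : coeff d (X i + F) = 0
        · rw [coeff_add] at h0
          have hne : coeff d (X i : MvPolynomial (Fin 3) K) ≠ 0 := by
            intro h; rw [h, zero_add] at h0; exact hd h0
          exact hXi hne
        · exact hE h0
      have hdi0 : ∀ d ∈ F.support, d i = 0 := by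
        intro d hd
        by_contra hne
        exact hv ((mem_vars i).mpr ⟨d, hd, Finsupp.mem_support_iff.mpr hne⟩)
      fin_cases i
      · -- elementary in x : e(X0) = X0 + F
        have he0 : e (X 0) = X 0 + F := he
        have he1 : e (X 1) = X 1 := hfix 1 (by decide)
        have he2 : e (X 2) = X 2 := hfix 2 (by decide)
        have hmemF : restrict K (ψ F) ∈ I ^ N := by
          rw [hcomp F, aeval_def, eval₂_eq']
          apply Ideal.sum_mem
          intro d hd
          have hd0 : d 0 = 0 := hdi0 d hd
          have hdc : coeff d F ≠ 0 := mem_support_iff.mp hd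
          have hwd : (d 1 : ℤ) * b + (d 2 : ℤ) * (-(c : ℤ)) = a := by
            have h := hF hdc
            rw [weight_eq_aux] at h
            simp only [hw, hd0] at h
            simp at h
            linarith
          have hd1 : qhat + c ≤ (d 1 : ℤ) :=
            nt_lemma a b c hb hc qhat hq1 hq2 hcb (d 1) (d 2) hwd
          have hd1' : N ≤ d 1 := by omega
          rw [Fin.prod_univ_three]
          have hq1m : q ^ (d 1) ∈ I ^ N := by
            have : q ^ (d 1) ∈ I ^ (d 1) := Ideal.pow_mem_pow hqI (d 1)
            exact Ideal.pow_le_pow_right hd1' this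
          simp only [Matrix.cons_val_zero, Matrix.cons_val_one, Matrix.head_cons,
            Matrix.cons_val_two, Matrix.tail_cons, hd0, pow_zero, one_mul, one_pow, mul_one]
          exact Ideal.mul_mem_left _ _ hq1m
        refine ⟨?_, ?_, ?_⟩
        · rw [hprod, he2]; exact hz2
        · rw [hprod, he0, map_add, map_add]
          have : restrict K (ψ (X 0)) + restrict K (ψ F) - X 0
              = (restrict K (ψ (X 0)) - X 0) + restrict K (ψ F) := by ring
          rw [this]
          exact Ideal.add_mem _ hx2 hmemF
        · rw [hprod, he1]; exact hy2
      · -- elementary in y : e(X1) = X1 + F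
        have he0 : e (X 0) = X 0 := hfix 0 (by decide)
        have he1 : e (X 1) = X 1 + F := he
        have he2 : e (X 2) = X 2 := hfix 2 (by decide)
        have hmemF : restrict K (ψ F) ∈ I := by
          rw [hcomp F, aeval_def, eval₂_eq']
          apply Ideal.sum_mem
          intro d hd
          have hd1 : d 1 = 0 := hdi0 d hd
          have hdc : coeff d F ≠ 0 := mem_support_iff.mp hd
          have hwd : (d 0 : ℤ) * a + (d 2 : ℤ) * (-(c : ℤ)) = b := by
            have h := hF hdc
            rw [weight_eq_aux] at h
            simp only [hw, hd1] at h
            simp at h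
            linarith
          -- (d 0) * a + (d 2) * (-c) = b  forces d 0 ≥ 1
          have hd0pos : 1 ≤ d 0 := by
            rcases Nat.eq_zero_or_pos (d 0) with h0 | h0
            · exfalso
              rw [h0] at hwd
              simp only [Nat.cast_zero, zero_mul, zero_add] at hwd
              have hbz : (0 : ℤ) < b := by exact_mod_cast hb
              have h2 : (0 : ℤ) ≤ (d 2 : ℤ) * c := by positivity
              nlinarith
            · exact h0
          rw [Fin.prod_univ_three]
          have hpm : p ^ (d 0) ∈ I := by
            have h1 : p ^ (d 0) ∈ I ^ (d 0) := Ideal.pow_mem_pow hpI (d 0)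
            have h2 : I ^ (d 0) ≤ I ^ 1 := Ideal.pow_le_pow_right hd0pos
            rw [pow_one] at h2
            exact h2 h1
          simp only [Matrix.cons_val_zero, Matrix.cons_val_one, Matrix.head_cons,
            Matrix.cons_val_two, Matrix.tail_cons, one_pow, mul_one]
          exact Ideal.mul_mem_left _ _ (Ideal.mul_mem_right _ _ hpm)
        refine ⟨?_, ?_, ?_⟩
        · rw [hprod, he2]; exact hz2
        · rw [hprod, he0]; exact hx2
        · rw [hprod, he1, map_add, map_add]
          exact Ideal.add_mem _ hy2 hmemF
      · -- elementary in z : F must be 0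
        have hF0 : F = 0 := by
          apply MvPolynomial.ext
          intro d
          rw [coeff_zero]
          by_contra hdc
          have hd2 : d 2 = 0 := hdi0 d (mem_support_iff.mpr hdc)
          have hwd : (d 0 : ℤ) * a + (d 1 : ℤ) * b = -(c : ℤ) := by
            have h := hF hdc
            rw [weight_eq_aux] at h
            simp only [hw, hd2] at h
            simp at h
            linarith
          have h0 : (0 : ℤ) ≤ (d 0 : ℤ) * a := by positivity
          have h1 : (0 : ℤ) ≤ (d 1 : ℤ) * b := by positivity
          have hcz : (0 : ℤ) < c := by exact_mod_cast hc
          linarith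
        have he0 : e (X 0) = X 0 := hfix 0 (by decide)
        have he1 : e (X 1) = X 1 := hfix 1 (by decide)
        have he2 : e (X 2) = X 2 := by simpa [hF0] using he
        exact ⟨by rw [hprod, he2]; exact hz2, by rw [hprod, he0]; exact hx2,
          by rw [hprod, he1]; exact hy2⟩
  obtain ⟨-, hx, -⟩ := key l hl
  refine ⟨1, restrict K (l.prod (X 0)) - X 0, one_ne_zero, hx, ?_⟩
  rw [map_one C]
  ring
end
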